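/- arXiv:2309.08427 — 4 statements merged into one kernel-verified Lean document; each statement's English description precedes it below -/
import Mathlib

section
/- Suppose the Fréchet derivative of the quadratic map N at a regular root u satisfies the inf-sup condition with constant β > 0: for every x ∈ X there exists y ∈ Y with ‖y‖_Y ≤ 1+τ (for any τ > 0) and β‖x‖_X ≤ a(x,y) + Γ(u,x,y) + Γ(x,u,y). If N(u) = 0 and Γ is bounded with norm ‖Γ‖, then for every v ∈ X: β‖u - v‖_X ≤ ‖N(v)‖_{Y*} + ‖Γ‖ ‖u-v‖_X². -/
set_option maxSynthPendingDepth 3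

/-- Inf-sup bound at a regular root:
`β‖u-v‖ ≤ ‖N(v)‖_{Y*} + ‖Γ‖‖u-v‖²`. -/
theorem stmt_5 {X Y : Type*} [NormedAddCommGroup X] [NormedSpace ℝ X]
    [NormedAddCommGroup Y] [NormedSpace ℝ Y] [CompleteSpace X] [CompleteSpace Y]
    (a : X →L[ℝ] Y →L[ℝ] ℝ) (Γ : X →L[ℝ] X →L[ℝ] Y →L[ℝ] ℝ) (F : Y →L[ℝ] ℝ)
    (u : X) (β : ℝ) (hβ : 0 < β)
    (hroot : a u + Γ u u - F = 0)
    (hinfsup : ∀ x : X, ∀ τ > (0 : ℝ), ∃ y : Y,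
      ‖y‖ ≤ 1 + τ ∧ β * ‖x‖ ≤ a x y + Γ u x y + Γ x u y) :
    ∀ v : X, β * ‖u - v‖ ≤ ‖a v + Γ v v - F‖ + ‖Γ‖ * ‖u - v‖ ^ 2 := by
  intro v
  set e := u - v with he
  set Nv := a v + Γ v v - F with hNv
  set C := ‖Nv‖ + ‖Γ‖ * ‖e‖ ^ 2 with hC
  have hC0 : (0:ℝ) ≤ C := by positivity
  refine le_of_forall_pos_le_add ?_
  intro ε hε
  have hτ : 0 < ε / (C + 1) := by positivity
  obtain ⟨y, hy1, hy2⟩ := hinfsup e (ε / (C + 1)) hτ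
  have hy0 : (0:ℝ) ≤ ‖y‖ := norm_nonneg _
  have h0 : a u y + Γ u u y - F y = 0 := by
    have := congrArg (fun T : Y →L[ℝ] ℝ => T y) hroot
    simpa using this
  have hid : a e y + Γ u e y + Γ e u y = -(Nv y) + Γ e e y := by
    simp only [he, hNv, map_sub, ContinuousLinearMap.sub_apply,
      ContinuousLinearMap.add_apply]
    linarith [h0]
  have hb1 : Nv y ≤ ‖Nv‖ * ‖y‖ := le_trans (le_abs_self _) (Nv.le_opNorm y)
  have hb1' : -(Nv y) ≤ ‖Nv‖ * ‖y‖ := le_trans (neg_le_abs _) (Nv.le_opNorm y)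
  have hb2 : Γ e e y ≤ ‖Γ‖ * ‖e‖ * ‖e‖ * ‖y‖ := by
    have h1 : |Γ e e y| ≤ ‖Γ e e‖ * ‖y‖ := (Γ e e).le_opNorm y
    have h2 : ‖Γ e e‖ ≤ ‖Γ‖ * ‖e‖ * ‖e‖ := Γ.le_opNorm₂ e e
    have he0 : (0:ℝ) ≤ ‖e‖ := norm_nonneg _
    calc Γ e e y ≤ |Γ e e y| := le_abs_self _
      _ ≤ ‖Γ e e‖ * ‖y‖ := h1
      _ ≤ ‖Γ‖ * ‖e‖ * ‖e‖ * ‖y‖ := mul_le_mul_of_nonneg_right h2 hy0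
  have key : β * ‖e‖ ≤ C * ‖y‖ := by
    have : β * ‖e‖ ≤ -(Nv y) + Γ e e y := hid ▸ hy2
    have hCexp : C * ‖y‖ = ‖Nv‖ * ‖y‖ + ‖Γ‖ * ‖e‖ * ‖e‖ * ‖y‖ := by
      rw [hC]; ring
    linarith
  have : C * ‖y‖ ≤ C * (1 + ε / (C + 1)) := by
    exact mul_le_mul_of_nonneg_left hy1 hC0
  have hlast : C * (1 + ε / (C + 1)) ≤ C + ε := by
    have hC1 : (0:ℝ) < C + 1 := by linarith
    have h1 : C * (ε / (C + 1)) ≤ ε := by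
      rw [mul_div_assoc', div_le_iff₀ hC1]
      have : C * ε ≤ (C + 1) * ε := mul_le_mul_of_nonneg_right (by linarith) hε.le
      linarith
    have hexp : C * (1 + ε / (C + 1)) = C + C * (ε / (C + 1)) := by ring
    linarith
  linarith
end

section
/- Control of the algebraic error by the residual (first inequality of Lemma on ‖u_h - v_h‖): Let N_h(x_h) := a_h(x_h,·) + Γ_pw(R x_h, R x_h, S·) - F_h on a finite-dimensional space X_h with test space Y_h, let u_h be a root of N_h, and let β_h > 0 be the inf-sup constant of DN_h(u_h). If v_h ∈ X_h and 0 < κ < 1 satisfy ‖Γ_pw‖‖R‖²‖S‖‖u_h - v_h‖ ≤ κβ_h, then (1-κ)β_h ‖u_h - v_h‖ ≤ ‖N_h(v_h)‖_{Y_h*}. -/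
set_option maxSynthPendingDepth 3
set_option maxHeartbeats 1000000

/-- Control of the algebraic error by the residual:
`(1-κ)β_h ‖u_h - v_h‖ ≤ ‖N_h(v_h)‖_{Y_h*}`. -/
theorem stmt_9 {Xbig Ybig Xh Yh : Type*}
    [NormedAddCommGroup Xbig] [NormedSpace ℝ Xbig]
    [NormedAddCommGroup Ybig] [NormedSpace ℝ Ybig]
    [NormedAddCommGroup Xh] [NormedSpace ℝ Xh] [FiniteDimensional ℝ Xh]
    [NormedAddCommGroup Yh] [NormedSpace ℝ Yh] [FiniteDimensional ℝ Yh]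
    (ah : Xh →L[ℝ] Yh →L[ℝ] ℝ) (Γ : Xbig →L[ℝ] Xbig →L[ℝ] Ybig →L[ℝ] ℝ)
    (R : Xh →L[ℝ] Xbig) (S : Yh →L[ℝ] Ybig) (Fh : Yh →L[ℝ] ℝ)
    (Nh : Xh → Yh →L[ℝ] ℝ)
    (hNh : ∀ x : Xh, Nh x = ah x + (Γ (R x) (R x)).comp S - Fh)
    (uh vh : Xh) (βh κ : ℝ) (hβ : 0 < βh) (hκ0 : 0 < κ) (hκ1 : κ < 1)
    (hroot : Nh uh = 0)
    (hinfsup : ∀ x : Xh, ∃ y : Yh, ‖y‖ ≤ 1 ∧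
      βh * ‖x‖ ≤ ah x y + Γ (R uh) (R x) (S y) + Γ (R x) (R uh) (S y))
    (hsmall : ‖Γ‖ * ‖R‖ ^ 2 * ‖S‖ * ‖uh - vh‖ ≤ κ * βh) :
    (1 - κ) * βh * ‖uh - vh‖ ≤ ‖Nh vh‖ := by
  set e := uh - vh with he
  obtain ⟨y, hy1, hy2⟩ := hinfsup e
  have hz : (Nh uh) y = 0 := by rw [hroot]; rfl
  have h1 := hNh uh
  have h2 := hNh vh
  have key : ah e y + Γ (R uh) (R e) (S y) + Γ (R e) (R uh) (S y)
      = -((Nh vh) y) + Γ (R e) (R e) (S y) := by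
    rw [h1] at hz
    rw [h2]
    simp only [he, map_sub, ContinuousLinearMap.sub_apply, ContinuousLinearMap.add_apply,
      ContinuousLinearMap.comp_apply] at hz ⊢
    ring_nf
    ring_nf at hz
    linarith
  have hb1 : -((Nh vh) y) ≤ ‖Nh vh‖ := by
    have h := (Nh vh).le_opNorm y
    rw [Real.norm_eq_abs] at h
    have h' : ‖Nh vh‖ * ‖y‖ ≤ ‖Nh vh‖ := by nlinarith [norm_nonneg (Nh vh)]
    have := neg_abs_le ((Nh vh) y)
    linarith [le_abs_self ((Nh vh) y)]
  have hb2 : Γ (R e) (R e) (S y) ≤ κ * βh * ‖e‖ := by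
    have c1 : ‖Γ (R e) (R e) (S y)‖ ≤ ‖Γ‖ * ‖R e‖ * ‖R e‖ * ‖S y‖ := by
      calc ‖Γ (R e) (R e) (S y)‖ ≤ ‖Γ (R e) (R e)‖ * ‖S y‖ := (Γ (R e) (R e)).le_opNorm _
        _ ≤ ‖Γ (R e)‖ * ‖R e‖ * ‖S y‖ := by
            gcongr; exact (Γ (R e)).le_opNorm _
        _ ≤ ‖Γ‖ * ‖R e‖ * ‖R e‖ * ‖S y‖ := by
            gcongr; exact Γ.le_opNorm _
    have cR : ‖R e‖ ≤ ‖R‖ * ‖e‖ := R.le_opNorm e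
    have cS : ‖S y‖ ≤ ‖S‖ * ‖y‖ := S.le_opNorm y
    have cS' : ‖S y‖ ≤ ‖S‖ := by
      calc ‖S y‖ ≤ ‖S‖ * ‖y‖ := cS
        _ ≤ ‖S‖ * 1 := by gcongr
        _ = ‖S‖ := mul_one _
    have c2 : ‖Γ‖ * ‖R e‖ * ‖R e‖ * ‖S y‖ ≤ ‖Γ‖ * (‖R‖ * ‖e‖) * (‖R‖ * ‖e‖) * ‖S‖ := by
      gcongr <;> positivity
    have c3 : ‖Γ‖ * (‖R‖ * ‖e‖) * (‖R‖ * ‖e‖) * ‖S‖ = (‖Γ‖ * ‖R‖ ^ 2 * ‖S‖ * ‖e‖) * ‖e‖ := by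
      ring
    calc Γ (R e) (R e) (S y) ≤ ‖Γ (R e) (R e) (S y)‖ := Real.le_norm_self _
      _ ≤ ‖Γ‖ * ‖R e‖ * ‖R e‖ * ‖S y‖ := c1
      _ ≤ (‖Γ‖ * ‖R‖ ^ 2 * ‖S‖ * ‖e‖) * ‖e‖ := by rw [← c3]; exact c2
      _ ≤ (κ * βh) * ‖e‖ := by gcongr
      _ = κ * βh * ‖e‖ := by ring
  have := hy2
  rw [key] at this
  linarith
end

section
/- Control of the residual by the algebraic error (second inequality of Lemma on ‖u_h - v_h‖): With the notation above, if ‖Γ_pw‖‖R‖²‖S‖‖u_h - v_h‖ ≤ κβ_h, then ‖N_h(v_h)‖_{Y_h*} ≤ (κβ_h + ‖DN_h(u_h)‖) ‖u_h - v_h‖, where ‖DN_h(u_h)‖ is the operator norm of the derivative of N_h at u_h. -/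
set_option maxSynthPendingDepth 3

/-- Control of the residual by the algebraic error:
`‖N_h(v_h)‖_{Y_h*} ≤ (κβ_h + ‖DN_h(u_h)‖)‖u_h - v_h‖`. -/
theorem stmt_10 {Xbig Ybig Xh Yh : Type*}
    [NormedAddCommGroup Xbig] [NormedSpace ℝ Xbig]
    [NormedAddCommGroup Ybig] [NormedSpace ℝ Ybig]
    [NormedAddCommGroup Xh] [NormedSpace ℝ Xh] [FiniteDimensional ℝ Xh]
    [NormedAddCommGroup Yh] [NormedSpace ℝ Yh] [FiniteDimensional ℝ Yh]
    (ah : Xh →L[ℝ] Yh →L[ℝ] ℝ) (Γ : Xbig →L[ℝ] Xbig →L[ℝ] Ybig →L[ℝ] ℝ)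
    (R : Xh →L[ℝ] Xbig) (S : Yh →L[ℝ] Ybig) (Fh : Yh →L[ℝ] ℝ)
    (Nh : Xh → Yh →L[ℝ] ℝ)
    (hNh : ∀ x : Xh, Nh x = ah x + (Γ (R x) (R x)).comp S - Fh)
    (uh vh : Xh) (βh κ : ℝ) (hβ : 0 < βh) (hκ0 : 0 < κ) (hκ1 : κ < 1)
    (hroot : Nh uh = 0)
    (D : Xh →L[ℝ] Yh →L[ℝ] ℝ)
    (hD : ∀ x : Xh, D x = ah x + (Γ (R uh) (R x)).comp S + (Γ (R x) (R uh)).comp S)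
    (hsmall : ‖Γ‖ * ‖R‖ ^ 2 * ‖S‖ * ‖uh - vh‖ ≤ κ * βh) :
    ‖Nh vh‖ ≤ (κ * βh + ‖D‖) * ‖uh - vh‖ := by

  have hF : ∀ y : Yh, Fh y = ah uh y + Γ (R uh) (R uh) (S y) := by
    intro y
    have h := congrArg (fun f : Yh →L[ℝ] ℝ => f y) ((hNh uh).symm.trans hroot)
    simp only [ContinuousLinearMap.sub_apply, ContinuousLinearMap.add_apply,
      ContinuousLinearMap.comp_apply, ContinuousLinearMap.zero_apply] at h
    linarith
  set e := uh - vh with he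
  have key : Nh vh = (Γ (R e) (R e)).comp S - D e := by
    ext y
    simp only [hNh, hD, he, map_sub, ContinuousLinearMap.sub_apply,
      ContinuousLinearMap.add_apply, ContinuousLinearMap.comp_apply, hF y]
    ring
  calc ‖Nh vh‖ ≤ ‖(Γ (R e) (R e)).comp S‖ + ‖D e‖ := by
        rw [key]; exact norm_sub_le _ _
    _ ≤ κ * βh * ‖e‖ + ‖D‖ * ‖e‖ := by
        gcongr
        · calc ‖(Γ (R e) (R e)).comp S‖ ≤ ‖Γ (R e) (R e)‖ * ‖S‖ :=
                ContinuousLinearMap.opNorm_comp_le _ _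
            _ ≤ ‖Γ‖ * ‖R e‖ * ‖R e‖ * ‖S‖ := by
                gcongr
                exact (Γ (R e)).le_opNorm _ |>.trans (by
                  gcongr; exact Γ.le_opNorm _)
            _ ≤ ‖Γ‖ * (‖R‖ * ‖e‖) * (‖R‖ * ‖e‖) * ‖S‖ := by
                gcongr <;> exact R.le_opNorm _
            _ = (‖Γ‖ * ‖R‖ ^ 2 * ‖S‖ * ‖e‖) * ‖e‖ := by ring
            _ ≤ κ * βh * ‖e‖ := by
                exact mul_le_mul_of_nonneg_right hsmall (norm_nonneg _)
        · exact D.le_opNorm _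
    _ = (κ * βh + ‖D‖) * ‖e‖ := by ring
end

section
/- Stability bound for the intermediate solution: with ũ solving a(ũ,y) = F(y) - Γ_pw(R v_h, R v_h, y), where u is a root of N (so a(u,y) + Γ(u,u,y) = F(y) for y ∈ Y) and α > 0 is the inf-sup constant of a, one has α‖u - ũ‖_X ≤ ‖Γ_pw‖ (‖u‖_X + ‖R v_h‖)(‖u - R v_h‖). -/
set_option maxSynthPendingDepth 3
set_option maxHeartbeats 1000000

/-- Stability bound for the intermediate solution:
`α‖u - ũ‖ ≤ ‖Γ_pw‖(‖u‖ + ‖R v_h‖)‖u - R v_h‖`. -/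
theorem stmt_14 {Xbig Ybig Xh : Type*}
    [NormedAddCommGroup Xbig] [NormedSpace ℝ Xbig]
    [NormedAddCommGroup Ybig] [NormedSpace ℝ Ybig]
    [NormedAddCommGroup Xh] [NormedSpace ℝ Xh]
    (X : Submodule ℝ Xbig) (Y : Submodule ℝ Ybig)
    (a : X →L[ℝ] Y →L[ℝ] ℝ) (F : Y →L[ℝ] ℝ)
    (Γ : Xbig →L[ℝ] Xbig →L[ℝ] Ybig →L[ℝ] ℝ)
    (R : Xh →L[ℝ] Xbig) (vh : Xh)
    (α : ℝ) (hα : 0 < α)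
    (hinfsup : ∀ x : X, ∀ τ > (0 : ℝ), ∃ y : Y, ‖y‖ ≤ 1 + τ ∧ α * ‖x‖ ≤ a x y)
    (u : X) (hroot : ∀ y : Y, a u y + Γ (u : Xbig) (u : Xbig) (y : Ybig) = F y)
    (ut : X) (hut : ∀ y : Y, a ut y = F y - Γ (R vh) (R vh) (y : Ybig)) :
    α * ‖(u : Xbig) - (ut : Xbig)‖
      ≤ ‖Γ‖ * (‖(u : Xbig)‖ + ‖R vh‖) * ‖(u : Xbig) - R vh‖ := by
  set C : ℝ := ‖Γ‖ * (‖(u : Xbig)‖ + ‖R vh‖) * ‖(u : Xbig) - R vh‖ with hC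
  have hC0 : 0 ≤ C := by positivity
  set w : X := u - ut with hw
  have hnw : ‖(u : Xbig) - (ut : Xbig)‖ = ‖w‖ := rfl
  -- bound on a w y
  have hbound : ∀ y : Y, a w y ≤ C * ‖y‖ := by
    intro y
    have heq : a w y = Γ (R vh) (R vh) (y : Ybig) - Γ (u : Xbig) (u : Xbig) (y : Ybig) := by
      have h1 : a u y = F y - Γ (u : Xbig) (u : Xbig) (y : Ybig) := by
        have := hroot y; linarith
      have h2 := hut y
      have : a w y = a u y - a ut y := by
        simp [hw, map_sub, ContinuousLinearMap.sub_apply]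
      rw [this, h1, h2]; ring
    have hsplit : Γ (u : Xbig) (u : Xbig) (y : Ybig) - Γ (R vh) (R vh) (y : Ybig)
        = Γ ((u : Xbig) - R vh) (u : Xbig) (y : Ybig)
          + Γ (R vh) ((u : Xbig) - R vh) (y : Ybig) := by
      simp [map_sub, ContinuousLinearMap.sub_apply]
    have hb1 : |Γ ((u : Xbig) - R vh) (u : Xbig) (y : Ybig)|
        ≤ ‖Γ‖ * ‖(u : Xbig) - R vh‖ * ‖(u : Xbig)‖ * ‖(y : Ybig)‖ := by
      calc |Γ ((u : Xbig) - R vh) (u : Xbig) (y : Ybig)|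
          ≤ ‖Γ ((u : Xbig) - R vh) (u : Xbig)‖ * ‖(y : Ybig)‖ :=
            (Γ _ _).le_opNorm _
        _ ≤ (‖Γ ((u : Xbig) - R vh)‖ * ‖(u : Xbig)‖) * ‖(y : Ybig)‖ := by
            gcongr; exact (Γ _).le_opNorm _
        _ ≤ ((‖Γ‖ * ‖(u : Xbig) - R vh‖) * ‖(u : Xbig)‖) * ‖(y : Ybig)‖ := by
            gcongr; exact Γ.le_opNorm _
        _ = ‖Γ‖ * ‖(u : Xbig) - R vh‖ * ‖(u : Xbig)‖ * ‖(y : Ybig)‖ := by ring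
    have hb2 : |Γ (R vh) ((u : Xbig) - R vh) (y : Ybig)|
        ≤ ‖Γ‖ * ‖R vh‖ * ‖(u : Xbig) - R vh‖ * ‖(y : Ybig)‖ := by
      calc |Γ (R vh) ((u : Xbig) - R vh) (y : Ybig)|
          ≤ ‖Γ (R vh) ((u : Xbig) - R vh)‖ * ‖(y : Ybig)‖ :=
            (Γ _ _).le_opNorm _
        _ ≤ (‖Γ (R vh)‖ * ‖(u : Xbig) - R vh‖) * ‖(y : Ybig)‖ := by
            gcongr; exact (Γ _).le_opNorm _
        _ ≤ ((‖Γ‖ * ‖R vh‖) * ‖(u : Xbig) - R vh‖) * ‖(y : Ybig)‖ := by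
            gcongr; exact Γ.le_opNorm _
        _ = ‖Γ‖ * ‖R vh‖ * ‖(u : Xbig) - R vh‖ * ‖(y : Ybig)‖ := by ring
    have hy : ‖y‖ = ‖(y : Ybig)‖ := rfl
    set A : ℝ := Γ ((u : Xbig) - R vh) (u : Xbig) (y : Ybig) with hA
    set B : ℝ := Γ (R vh) ((u : Xbig) - R vh) (y : Ybig) with hB
    have : a w y ≤ |A| + |B| := by
      have h0 : a w y = -(A + B) := by
        rw [heq, ← hsplit]; ring
      rw [h0]
      have h1 := abs_le.mp (le_refl |A + B|) |>.1
      have h2 := abs_add_le A B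
      linarith [neg_abs_le (A + B), neg_le_abs (A + B), abs_add_le A B, le_abs_self A, le_abs_self B, abs_nonneg A, abs_nonneg B, neg_abs_le A, neg_abs_le B]
    rw [hy]
    calc a w y ≤ _ := this
      _ ≤ ‖Γ‖ * ‖(u : Xbig) - R vh‖ * ‖(u : Xbig)‖ * ‖(y : Ybig)‖
          + ‖Γ‖ * ‖R vh‖ * ‖(u : Xbig) - R vh‖ * ‖(y : Ybig)‖ := add_le_add hb1 hb2
      _ = C * ‖(y : Ybig)‖ := by rw [hC]; ring
  rw [hnw]
  -- conclude via inf-sup and limit argument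
  refine le_of_forall_pos_le_add ?_
  intro ε hε
  obtain ⟨y, hy1, hy2⟩ := hinfsup w (ε / (C + 1)) (by positivity)
  calc α * ‖w‖ ≤ a w y := hy2
    _ ≤ C * ‖y‖ := hbound y
    _ ≤ C * (1 + ε / (C + 1)) := by gcongr
    _ = C + C * (ε / (C + 1)) := by ring
    _ ≤ C + ε := by
        have : C * (ε / (C + 1)) ≤ 1 * ε := by
          rw [div_eq_mul_inv]
          have h1 : C * (ε * (C + 1)⁻¹) = (C / (C + 1)) * ε := by
            field_simp
          rw [h1, one_mul]
          have : C / (C + 1) ≤ 1 := by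
            rw [div_le_one (by linarith)]; linarith
          nlinarith [hε.le, this]
        linarith
end
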